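/- For all c₁, c₂ ∈ ℝ, KL(PG(1,c₁) ‖ PG(1,c₂)) ≤ (1/8)(c₁ − c₂)². -/
import Mathlib

open Real MeasureTheory

/-- density of the Pólya-Gamma distribution `PG(1,c)`, given the density `f0` of `PG(1,0)` -/
noncomputable def pgPdf (f0 : ℝ → ℝ) (c x : ℝ) : ℝ :=
  Real.exp (-(c ^ 2 / 2) * x) * Real.cosh (c / 2) * f0 x

/-- KL divergence `KL(PG(1,c₁) ‖ PG(1,c₂))` as the integral of the log density ratio -/
noncomputable def klPG (f0 : ℝ → ℝ) (c₁ c₂ : ℝ) : ℝ :=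
  ∫ x in Set.Ioi (0 : ℝ), Real.log (pgPdf f0 c₁ x / pgPdf f0 c₂ x) * pgPdf f0 c₁ x

lemma tanh_mono' {a b : ℝ} (h : a ≤ b) : Real.tanh a ≤ Real.tanh b := by
  rw [Real.tanh_eq_sinh_div_cosh, Real.tanh_eq_sinh_div_cosh,
    div_le_div_iff₀ (Real.cosh_pos a) (Real.cosh_pos b)]
  have h1 : Real.sinh (a - b) ≤ 0 := Real.sinh_nonpos_iff.mpr (sub_nonpos.mpr h)
  have h2 := Real.sinh_sub a b
  nlinarith

lemma hasDerivAt_logcosh (t : ℝ) :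
    HasDerivAt (fun t => Real.log (Real.cosh t)) (Real.tanh t) t := by
  have := (Real.hasDerivAt_cosh t).log (Real.cosh_pos t).ne'
  simpa [Real.tanh_eq_sinh_div_cosh] using this

lemma tanh_le_self' {x : ℝ} (hx : 0 ≤ x) : Real.tanh x ≤ x := by
  rw [Real.tanh_eq_sinh_div_cosh, div_le_iff₀ (Real.cosh_pos x)]
  have hmono : MonotoneOn (fun y => y * Real.cosh y - Real.sinh y) (Set.Ici 0) := by
    apply monotoneOn_of_deriv_nonneg (convex_Ici 0)
    · exact ((continuous_id.mul Real.continuous_cosh).sub Real.continuous_sinh).continuousOn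
    · intro y _
      exact (((hasDerivAt_id y).mul (Real.hasDerivAt_cosh y)).sub
        (Real.hasDerivAt_sinh y)).differentiableAt.differentiableWithinAt
    · intro y hy
      rw [interior_Ici, Set.mem_Ioi] at hy
      have hd : HasDerivAt (fun y => y * Real.cosh y - Real.sinh y)
          (1 * Real.cosh y + y * Real.sinh y - Real.cosh y) y :=
        ((hasDerivAt_id y).mul (Real.hasDerivAt_cosh y)).sub (Real.hasDerivAt_sinh y)
      rw [hd.deriv]
      have : 0 ≤ Real.sinh y := Real.sinh_nonneg_iff.mpr hy.le
      nlinarith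
  have h0 := hmono (Set.self_mem_Ici) hx hx
  simp at h0
  linarith

lemma logcosh_sub_le (a b : ℝ) :
    Real.log (Real.cosh a) - Real.log (Real.cosh b) ≤ Real.tanh a * (a - b) := by
  rcases lt_trichotomy a b with h | h | h
  · obtain ⟨c, hc, hc2⟩ := exists_hasDerivAt_eq_slope (fun t => Real.log (Real.cosh t))
      Real.tanh h (fun x _ => (hasDerivAt_logcosh x).continuousAt.continuousWithinAt)
      (fun x _ => hasDerivAt_logcosh x)
    have hba : 0 < b - a := sub_pos.2 h
    have he : Real.log (Real.cosh b) - Real.log (Real.cosh a) = Real.tanh c * (b - a) := by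
      field_simp at hc2; linarith
    have hmono := tanh_mono' hc.1.le
    nlinarith
  · simp [h]
  · obtain ⟨c, hc, hc2⟩ := exists_hasDerivAt_eq_slope (fun t => Real.log (Real.cosh t))
      Real.tanh h (fun x _ => (hasDerivAt_logcosh x).continuousAt.continuousWithinAt)
      (fun x _ => hasDerivAt_logcosh x)
    have hba : 0 < a - b := sub_pos.2 h
    have he : Real.log (Real.cosh a) - Real.log (Real.cosh b) = Real.tanh c * (a - b) := by
      field_simp at hc2; linarith
    have hmono := tanh_mono' hc.2.le
    nlinarith

lemma kl_eq (f0 : ℝ → ℝ) (c₁ c₂ M : ℝ)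
    (hpdf1 : ∫ x in Set.Ioi (0:ℝ), pgPdf f0 c₁ x = 1)
    (hMeq : ∫ x in Set.Ioi (0:ℝ), x * pgPdf f0 c₁ x = M) (hMne : M ≠ 0) :
    klPG f0 c₁ c₂ = (c₂ ^ 2 - c₁ ^ 2) / 2 * M
      + (Real.log (Real.cosh (c₁ / 2)) - Real.log (Real.cosh (c₂ / 2))) := by
  have hg : IntegrableOn (pgPdf f0 c₁) (Set.Ioi 0) := by
    by_contra h
    rw [MeasureTheory.integral_undef h] at hpdf1
    norm_num at hpdf1
  have hxg : IntegrableOn (fun x => x * pgPdf f0 c₁ x) (Set.Ioi 0) := by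
    by_contra h
    rw [MeasureTheory.integral_undef h] at hMeq
    exact hMne hMeq.symm
  have hptw : ∀ x : ℝ, Real.log (pgPdf f0 c₁ x / pgPdf f0 c₂ x) * pgPdf f0 c₁ x
      = (c₂ ^ 2 - c₁ ^ 2) / 2 * (x * pgPdf f0 c₁ x)
        + (Real.log (Real.cosh (c₁ / 2)) - Real.log (Real.cosh (c₂ / 2))) * pgPdf f0 c₁ x := by
    intro x
    by_cases hfx : f0 x = 0
    · simp [pgPdf, hfx]
    · have hc1pos := Real.cosh_pos (c₁ / 2)
      have hc2pos := Real.cosh_pos (c₂ / 2)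
      have h1 : pgPdf f0 c₁ x / pgPdf f0 c₂ x
          = Real.exp ((c₂ ^ 2 - c₁ ^ 2) / 2 * x) * (Real.cosh (c₁ / 2) / Real.cosh (c₂ / 2)) := by
        have hne : Real.exp (-(c₂ ^ 2 / 2) * x) * Real.cosh (c₂ / 2) * f0 x ≠ 0 :=
          mul_ne_zero (mul_ne_zero (Real.exp_ne_zero _) hc2pos.ne') hfx
        simp only [pgPdf]
        rw [div_eq_iff hne]
        have hexp : Real.exp (-(c₁ ^ 2 / 2) * x)
            = Real.exp ((c₂ ^ 2 - c₁ ^ 2) / 2 * x) * Real.exp (-(c₂ ^ 2 / 2) * x) := by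
          rw [← Real.exp_add]; ring_nf
        rw [hexp]
        field_simp
      rw [h1, Real.log_mul (Real.exp_ne_zero _) (div_pos hc1pos hc2pos).ne',
        Real.log_exp, Real.log_div hc1pos.ne' hc2pos.ne']
      ring
  calc klPG f0 c₁ c₂
      = ∫ x in Set.Ioi (0:ℝ), ((c₂ ^ 2 - c₁ ^ 2) / 2 * (x * pgPdf f0 c₁ x)
        + (Real.log (Real.cosh (c₁ / 2)) - Real.log (Real.cosh (c₂ / 2))) * pgPdf f0 c₁ x) := by
        unfold klPG; exact integral_congr_ae (Filter.Eventually.of_forall hptw)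
    _ = (c₂ ^ 2 - c₁ ^ 2) / 2 * M
        + (Real.log (Real.cosh (c₁ / 2)) - Real.log (Real.cosh (c₂ / 2))) := by
        rw [MeasureTheory.integral_add (hxg.const_mul _) (hg.const_mul _),
          integral_const_mul, integral_const_mul, hMeq, hpdf1, mul_one]

theorem stmt6 (f0 : ℝ → ℝ)
    (hf0 : ∀ x ≤ (0 : ℝ), f0 x = 0)
    (hpdf : ∀ c : ℝ, ∫ x in Set.Ioi (0 : ℝ), pgPdf f0 c x = 1)
    (hmean : ∀ c : ℝ, c ≠ 0 →
      ∫ x in Set.Ioi (0 : ℝ), x * pgPdf f0 c x = 1 / (2 * c) * Real.tanh (c / 2))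
    (hmean0 : ∫ x in Set.Ioi (0 : ℝ), x * f0 x = 1 / 4) :
    ∀ c₁ c₂ : ℝ, klPG f0 c₁ c₂ ≤ (1 / 8) * (c₁ - c₂) ^ 2 := by
  intro c₁ c₂
  by_cases hc₁ : c₁ = 0
  · subst hc₁
    have hM0 : ∫ x in Set.Ioi (0:ℝ), x * pgPdf f0 0 x = 1 / 4 := by
      have h : ∀ x : ℝ, x * pgPdf f0 0 x = x * f0 x := by
        intro x; simp [pgPdf]
      simp only [h]; exact hmean0
    rw [kl_eq f0 0 c₂ (1/4) (hpdf 0) hM0 (by norm_num)]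
    have hlc : 0 ≤ Real.log (Real.cosh (c₂ / 2)) := Real.log_nonneg (Real.one_le_cosh _)
    have h0 : Real.log (Real.cosh ((0:ℝ) / 2)) = 0 := by norm_num
    rw [h0]
    nlinarith [sq_nonneg c₂]
  · have hM := hmean c₁ hc₁
    have htne : Real.tanh (c₁ / 2) ≠ 0 := by
      rw [Real.tanh_eq_sinh_div_cosh]
      exact div_ne_zero (Real.sinh_ne_zero.mpr (div_ne_zero hc₁ two_ne_zero))
        (Real.cosh_pos _).ne'
    have hMne : 1 / (2 * c₁) * Real.tanh (c₁ / 2) ≠ 0 :=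
      mul_ne_zero (one_div_ne_zero (mul_ne_zero two_ne_zero hc₁)) htne
    rw [kl_eq f0 c₁ c₂ _ (hpdf c₁) hM hMne]
    set t := Real.tanh (c₁ / 2) with ht
    have hA : Real.log (Real.cosh (c₁ / 2)) - Real.log (Real.cosh (c₂ / 2))
        ≤ t * (c₁ / 2 - c₂ / 2) := logcosh_sub_le (c₁ / 2) (c₂ / 2)
    have hs : t / c₁ ≤ 1 / 2 := by
      rcases lt_or_gt_of_ne hc₁ with h | h
      · rw [div_le_iff_of_neg h]
        have h1 : Real.tanh (-(c₁ / 2)) ≤ -(c₁ / 2) := tanh_le_self' (by linarith)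
        rw [Real.tanh_neg] at h1
        rw [ht]; linarith
      · rw [div_le_iff₀ h]
        have h1 : Real.tanh (c₁ / 2) ≤ c₁ / 2 := tanh_le_self' (by linarith)
        rw [ht]; linarith
    have e : (c₂ ^ 2 - c₁ ^ 2) / 2 * (1 / (2 * c₁) * t) + t * (c₁ / 2 - c₂ / 2)
        = (t / c₁) * ((c₁ - c₂) ^ 2 / 4) := by
      field_simp
      ring
    calc (c₂ ^ 2 - c₁ ^ 2) / 2 * (1 / (2 * c₁) * t)
        + (Real.log (Real.cosh (c₁ / 2)) - Real.log (Real.cosh (c₂ / 2)))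
        ≤ (c₂ ^ 2 - c₁ ^ 2) / 2 * (1 / (2 * c₁) * t) + t * (c₁ / 2 - c₂ / 2) := by linarith
      _ = (t / c₁) * ((c₁ - c₂) ^ 2 / 4) := e
      _ ≤ (1 / 2) * ((c₁ - c₂) ^ 2 / 4) :=
          mul_le_mul_of_nonneg_right hs (by positivity)
      _ = (1 / 8) * (c₁ - c₂) ^ 2 := by ring
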